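/- arXiv:1807.06097 — 4 statements merged into one kernel-verified Lean document; each statement's English description precedes it below -/
import Mathlib

section
/- Let A be a type and let R be the multivariate polynomial ring over ℤ with variables X_{a,k} indexed by pairs (a, k) with a ∈ A and k a positive natural number. Let I be the ideal of R generated by the elements X_{a,k}·X_{a,l} − Σ_{i=0}^{l} binom(k+i, i)·binom(k, l−i)·X_{a,k+i}, taken over all a ∈ A and all 1 ≤ l ≤ k. Then for every a ∈ A and every k ≥ 1, the element k!·X_{a,k} − Π_{i=0}^{k−1}(X_{a,1} − i) belongs to I. (The ideal I' generated by these elements is contained in I.) -/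
/-!
Only the relations with `l = 1` are needed: modulo `I` they read
`X_k X_1 ≡ k X_k + (k+1) X_{k+1}`, i.e. `(k+1)! X_{k+1} ≡ k! X_k (X_1 - k)`.
Iterating from `X_1` gives `k! X_k ≡ X_1 (X_1 - 1) ⋯ (X_1 - k + 1)`.
-/

open MvPolynomial

/-- The variable `X_{a,k}` of the polynomial ring `ℤ[X_{a,k} : a ∈ A, k ∈ ℕ⁺]`. -/
noncomputable def Xv {A : Type*} (a : A) (k : ℕ+) : MvPolynomial (A × ℕ+) ℤ :=
  MvPolynomial.X (a, k)

/-- The positive natural `k + i`. -/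
def padd (k : ℕ+) (i : ℕ) : ℕ+ :=
  ⟨(k : ℕ) + i, Nat.lt_of_lt_of_le k.pos (Nat.le_add_right _ _)⟩

/-- Generators of the ideal `I`: the elements
`X_{a,k}·X_{a,l} − Σ_{i=0}^{l} binom(k+i,i)·binom(k,l−i)·X_{a,k+i}` for `1 ≤ l ≤ k`. -/
def genI (A : Type*) : Set (MvPolynomial (A × ℕ+) ℤ) :=
  {p | ∃ (a : A) (k l : ℕ+), l ≤ k ∧
    p = Xv a k * Xv a l - ∑ i ∈ Finset.range ((l : ℕ) + 1),
      (Nat.choose ((k : ℕ) + i) i * Nat.choose (k : ℕ) ((l : ℕ) - i)) • Xv a (padd k i)}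

/-- Generators of the ideal `I'`: the elements
`k!·X_{a,k} − Π_{i=0}^{k−1}(X_{a,1} − i)` for `k ≥ 1`. -/
def genI' (A : Type*) : Set (MvPolynomial (A × ℕ+) ℤ) :=
  {p | ∃ (a : A) (k : ℕ+),
    p = Nat.factorial (k : ℕ) • Xv a k -
      ∏ i ∈ Finset.range (k : ℕ), (Xv a 1 - MvPolynomial.C (i : ℤ))}

open Finset Nat

theorem factorial_mul_sub_prod_range_sub_mem {R : Type*} [CommRing R] {I : Ideal R}
    (x : ℕ+ → R) (hx : ∀ k : ℕ+, x k * x 1 - ((k : R) * x k + ((k : R) + 1) * x (k + 1)) ∈ I)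
    (k : ℕ+) : (k ! : R) * x k - ∏ i ∈ range k, (x 1 - i) ∈ I := by
  induction k using PNat.recOn with
  | one => simp
  | succ k ih =>
    have step : ((k + 1 : ℕ+) ! : R) * x (k + 1) - ∏ i ∈ range (k + 1 : ℕ+), (x 1 - i) =
        (x 1 - k) * ((k ! : R) * x k - ∏ i ∈ range k, (x 1 - i)) -
          (k ! : R) * (x k * x 1 - ((k : R) * x k + ((k : R) + 1) * x (k + 1))) := by
      rw [PNat.add_coe, PNat.one_coe, prod_range_succ, factorial_succ]
      push_cast
      ring
    rw [step]
    exact I.sub_mem (I.mul_mem_left _ ih) (I.mul_mem_left _ (hx k))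

theorem Xv_mul_Xv_one_sub_mem_span_genI {A : Type*} (a : A) (k : ℕ+) :
    Xv a k * Xv a 1 - ((k : MvPolynomial (A × ℕ+) ℤ) * Xv a k +
      ((k : MvPolynomial (A × ℕ+) ℤ) + 1) * Xv a (k + 1)) ∈ Ideal.span (genI A) := by
  have hpadd₀ : padd k 0 = k := rfl
  have hpadd₁ : padd k 1 = k + 1 := rfl
  refine Ideal.subset_span ⟨a, k, 1, one_le, ?_⟩
  simp [sum_range_succ, hpadd₀, hpadd₁, nsmul_eq_mul]

/-- Every generator of `I'` belongs to `I`, i.e. `I' ⊆ I`. -/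
theorem genI'_mem_spanI {A : Type*} (a : A) (k : ℕ+) :
    Nat.factorial (k : ℕ) • Xv a k -
        ∏ i ∈ Finset.range (k : ℕ), (Xv a 1 - MvPolynomial.C (i : ℤ)) ∈
      Ideal.span (genI A) := by
  simpa only [nsmul_eq_mul, map_natCast] using
    factorial_mul_sub_prod_range_sub_mem (Xv a) (Xv_mul_Xv_one_sub_mem_span_genI a) k
end

section
/- Let A be a type and let R be the multivariate polynomial ring over ℤ with variables X_{a,k} indexed by pairs (a, k) with a ∈ A and k a positive natural number. Let I be the ideal of R generated by the elements X_{a,k}·X_{a,l} − Σ_{i=0}^{l} binom(k+i, i)·binom(k, l−i)·X_{a,k+i} over all a ∈ A and 1 ≤ l ≤ k, and let I' be the ideal generated by the elements k!·X_{a,k} − Π_{i=0}^{k−1}(X_{a,1} − i) over all a ∈ A and k ≥ 1. Then for every α ∈ I there exists a natural number n such that n!·α ∈ I'. -/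
open MvPolynomial

section aux

lemma pnat_helper (k j : ℕ) : ((Nat.choose k (j+1) * (j+1) : ℕ) : ℤ) = (Nat.choose k j : ℤ) * ((k:ℤ) - j) := by
  rcases le_or_gt j k with h | h
  · have := Nat.choose_succ_right_eq k j
    have h2 : ((k - j : ℕ) : ℤ) = (k:ℤ) - j := by omega
    rw [← h2]
    exact_mod_cast congrArg (fun n : ℕ => (n : ℤ)) this
  · rw [Nat.choose_eq_zero_of_lt h, Nat.choose_eq_zero_of_lt (by omega)]
    simp

lemma pnat_coeff_step (k l i : ℕ) :
    ((Nat.choose k (l-i) * Nat.choose (l+1) (i+1) * Nat.factorial (l-i) : ℕ) : ℤ)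
    = ((Nat.choose k (l-i) * Nat.choose l i * Nat.factorial (l-i) : ℕ) : ℤ)
      + ((Nat.choose k (l-(i+1)) * Nat.choose l (i+1) * Nat.factorial (l-(i+1)) : ℕ) : ℤ)
        * ((k:ℤ) + i + 1 - l) := by
  rw [Nat.choose_succ_succ]
  push_cast [Nat.mul_add, Nat.add_mul]
  have key : ((Nat.choose k (l-i) : ℤ) * Nat.choose l (i+1) * Nat.factorial (l-i))
      = (Nat.choose k (l-(i+1)) : ℤ) * Nat.choose l (i+1) * Nat.factorial (l-(i+1)) * ((k:ℤ)+i+1-l) := by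
    rcases Nat.lt_or_ge i l with h2 | h2
    · set j := l - (i+1) with hj
      have hji : l - i = j + 1 := by omega
      have hk : (k:ℤ) + i + 1 - l = (k:ℤ) - j := by omega
      rw [hji, hk, Nat.factorial_succ]
      have h3 := pnat_helper k j
      push_cast at h3 ⊢
      linear_combination ((Nat.choose l (i+1) : ℤ) * Nat.factorial j) * h3
    · have h4 : Nat.choose l (i+1) = 0 := Nat.choose_eq_zero_of_lt (by omega)
      simp [h4]
  linarith [key]

/-- falling-factorial product -/
noncomputable def dprod {R : Type*} [CommRing R] (x : R) (m : ℕ) : R :=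
  ∏ j ∈ Finset.range m, (x - (j : R))

lemma dprod_succ {R : Type*} [CommRing R] (x : R) (m : ℕ) :
    dprod x (m+1) = dprod x m * (x - (m:R)) := by
  simp [dprod, Finset.prod_range_succ]

lemma dprod_mul_dprod {R : Type*} [CommRing R] (x : R) (k : ℕ) : ∀ l : ℕ,
    dprod x k * dprod x l
    = ∑ i ∈ Finset.range (l+1),
        ((Nat.choose k (l-i) * Nat.choose l i * Nat.factorial (l-i) : ℕ) : R) * dprod x (k+i) := by
  intro l
  induction l with
  | zero => simp [dprod]
  | succ l ih =>
    have e1 : dprod x k * dprod x (l+1) = (dprod x k * dprod x l) * (x - (l:R)) := by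
      rw [dprod_succ]; ring
    rw [e1, ih, Finset.sum_mul]
    have e2 : ∀ i ∈ Finset.range (l+1),
        ((Nat.choose k (l-i) * Nat.choose l i * Nat.factorial (l-i) : ℕ) : R) * dprod x (k+i) * (x - (l:R))
        = ((Nat.choose k (l-i) * Nat.choose l i * Nat.factorial (l-i) : ℕ) : R) * dprod x (k+i+1)
          + ((Nat.choose k (l-i) * Nat.choose l i * Nat.factorial (l-i) : ℕ) : R)
            * ((((k:ℤ)+i-l : ℤ) : R)) * dprod x (k+i) := by
      intro i _
      have hx : (x - (l:R)) = (x - ((k+i : ℕ):R)) + ((((k:ℤ)+i-l : ℤ) : R)) := by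
        push_cast; ring
      rw [hx, mul_add, mul_assoc _ (dprod x (k+i)) _, ← dprod_succ]
      ring
    rw [Finset.sum_congr rfl e2, Finset.sum_add_distrib]
    rw [Finset.sum_range_succ' (fun i => ((Nat.choose k (l+1-i) * Nat.choose (l+1) i * Nat.factorial (l+1-i) : ℕ) : R) * dprod x (k+i)) (l+1)]
    have hS2 : (∑ i ∈ Finset.range (l+1),
          ((Nat.choose k (l-i) * Nat.choose l i * Nat.factorial (l-i) : ℕ) : R)
            * ((((k:ℤ)+i-l : ℤ) : R)) * dprod x (k+i))
        = (∑ i ∈ Finset.range (l+1),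
            ((Nat.choose k (l-(i+1)) * Nat.choose l (i+1) * Nat.factorial (l-(i+1)) : ℕ) : R)
              * ((((k:ℤ)+(i+1)-l : ℤ) : R)) * dprod x (k+(i+1)))
          + ((Nat.choose k l * Nat.choose l 0 * Nat.factorial l : ℕ) : R)
              * ((((k:ℤ)-l : ℤ) : R)) * dprod x k := by
      rw [Finset.sum_range_succ' _ l]
      congr 1
      · rw [Finset.sum_range_succ]
        simp [Nat.choose_succ_self]
    rw [hS2, ← add_assoc, ← Finset.sum_add_distrib]
    congr 1
    · apply Finset.sum_congr rfl
      intro i hi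
      rw [Finset.mem_range] at hi
      have hcR := congrArg (fun z : ℤ => (z : R)) (pnat_coeff_step k l i)
      have hidx : k + (i+1) = k + i + 1 := rfl
      rw [hidx]
      push_cast at hcR ⊢
      linear_combination (-(dprod x (k+i+1))) * hcR
    · have h3R := congrArg (fun z : ℤ => (z : R)) (pnat_helper k l)
      simp only [Nat.add_zero, Nat.sub_zero, Nat.choose_zero_right]
      push_cast [Nat.factorial_succ] at h3R ⊢
      linear_combination (-((Nat.factorial l : R) * dprod x k)) * h3R

lemma ringHom_dprod {R S : Type*} [CommRing R] [CommRing S] (f : R →+* S) (x : R) (m : ℕ) :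
    f (dprod x m) = dprod (f x) m := by
  simp [dprod, map_prod]

/-- the Nat coefficient identity -/
lemma coeff_nat (k l i : ℕ) (h : i ≤ l) :
    Nat.choose k (l-i) * Nat.choose l i * Nat.factorial (l-i) * Nat.factorial (k+i)
    = Nat.choose (k+i) i * Nat.choose k (l-i) * (Nat.factorial k * Nat.factorial l) := by
  have h1 : Nat.choose l i * Nat.factorial i * Nat.factorial (l-i) = Nat.factorial l :=
    Nat.choose_mul_factorial_mul_factorial h
  have h2 : Nat.choose (k+i) i * Nat.factorial i * Nat.factorial k = Nat.factorial (k+i) := by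
    have := Nat.choose_mul_factorial_mul_factorial (show i ≤ k + i by omega)
    rwa [show k + i - i = k by omega] at this
  apply Nat.eq_of_mul_eq_mul_left (Nat.factorial_pos i)
  calc Nat.factorial i * (Nat.choose k (l-i) * Nat.choose l i * Nat.factorial (l-i) * Nat.factorial (k+i))
      = (Nat.choose l i * Nat.factorial i * Nat.factorial (l-i)) * (Nat.choose k (l-i) * Nat.factorial (k+i)) := by ring
    _ = Nat.factorial l * (Nat.choose k (l-i) * Nat.factorial (k+i)) := by rw [h1]
    _ = (Nat.choose (k+i) i * Nat.factorial i * Nat.factorial k) * (Nat.choose k (l-i) * Nat.factorial l) := by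
        rw [h2]; ring
    _ = Nat.factorial i * (Nat.choose (k+i) i * Nat.choose k (l-i) * (Nat.factorial k * Nat.factorial l)) := by ring

end aux

/-- Every element of `I` has a positive-integer (factorial) multiple lying in `I'`. -/
theorem spanI_factorial_multiple_mem_spanI' {A : Type*} (α : MvPolynomial (A × ℕ+) ℤ)
    (hα : α ∈ Ideal.span (genI A)) :
    ∃ n : ℕ, Nat.factorial n • α ∈ Ideal.span (genI' A) := by
  set J := Ideal.span (genI' A) with hJ
  refine Submodule.span_induction ?_ ?_ ?_ ?_ hα
  · -- generators
    rintro p ⟨a, k, l, hlk, rfl⟩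
    refine ⟨(k:ℕ) + (l:ℕ), ?_⟩
    have hmain : ((k:ℕ).factorial * (l:ℕ).factorial)
        • (Xv a k * Xv a l - ∑ i ∈ Finset.range ((l : ℕ) + 1),
            (Nat.choose ((k : ℕ) + i) i * Nat.choose (k : ℕ) ((l : ℕ) - i)) • Xv a (padd k i)) ∈ J := by
      rw [← Ideal.Quotient.eq_zero_iff_mem]
      set Q := Ideal.Quotient.mk J with hQ
      have hgen : ∀ m : ℕ+, ((m:ℕ).factorial : MvPolynomial (A × ℕ+) ℤ ⧸ J) * Q (Xv a m)
          = Q (dprod (Xv a 1) (m:ℕ)) := by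
        intro m
        have hmem : (Nat.factorial (m : ℕ) • Xv a m -
            ∏ i ∈ Finset.range (m : ℕ), (Xv a 1 - MvPolynomial.C (i : ℤ))) ∈ J :=
          Ideal.subset_span ⟨a, m, rfl⟩
        have hdp : (∏ i ∈ Finset.range (m : ℕ), (Xv a 1 - MvPolynomial.C (i : ℤ)))
            = dprod (Xv a 1) (m:ℕ) := by
          unfold dprod
          refine Finset.prod_congr rfl fun j _ => ?_
          congr 1
        rw [hdp] at hmem
        have := Ideal.Quotient.eq_zero_iff_mem.mpr hmem
        rw [map_sub, sub_eq_zero] at this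
        rw [← this, map_nsmul, nsmul_eq_mul]
      -- abbreviations
      have hxy : Q (Xv a k * Xv a l)
          = Q (Xv a k) * Q (Xv a l) := map_mul _ _ _
      -- main computation
      rw [map_nsmul, map_sub, map_mul, map_sum]
      rw [nsmul_eq_mul, Nat.cast_mul, mul_sub]
      have hL : ((k:ℕ).factorial : MvPolynomial (A × ℕ+) ℤ ⧸ J) * ((l:ℕ).factorial : MvPolynomial (A × ℕ+) ℤ ⧸ J)
            * (Q (Xv a k) * Q (Xv a l))
          = ∑ i ∈ Finset.range ((l:ℕ)+1),
              ((Nat.choose (k:ℕ) ((l:ℕ)-i) * Nat.choose (l:ℕ) i * Nat.factorial ((l:ℕ)-i)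
                  * Nat.factorial ((k:ℕ)+i) : ℕ) : MvPolynomial (A × ℕ+) ℤ ⧸ J)
                * Q (Xv a (padd k i)) := by
        calc ((k:ℕ).factorial : MvPolynomial (A × ℕ+) ℤ ⧸ J) * ((l:ℕ).factorial : MvPolynomial (A × ℕ+) ℤ ⧸ J)
              * (Q (Xv a k) * Q (Xv a l))
            = (((k:ℕ).factorial : MvPolynomial (A × ℕ+) ℤ ⧸ J) * Q (Xv a k))
              * (((l:ℕ).factorial : MvPolynomial (A × ℕ+) ℤ ⧸ J) * Q (Xv a l)) := by ring
          _ = Q (dprod (Xv a 1) (k:ℕ)) * Q (dprod (Xv a 1) (l:ℕ)) := by rw [hgen k, hgen l]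
          _ = dprod (Q (Xv a 1)) (k:ℕ) * dprod (Q (Xv a 1)) (l:ℕ) := by
              rw [ringHom_dprod, ringHom_dprod]
          _ = ∑ i ∈ Finset.range ((l:ℕ)+1),
                ((Nat.choose (k:ℕ) ((l:ℕ)-i) * Nat.choose (l:ℕ) i * Nat.factorial ((l:ℕ)-i) : ℕ)
                   : MvPolynomial (A × ℕ+) ℤ ⧸ J)
                  * dprod (Q (Xv a 1)) ((k:ℕ)+i) := dprod_mul_dprod _ _ _
          _ = _ := by
              refine Finset.sum_congr rfl fun i _ => ?_
              have : dprod (Q (Xv a 1)) ((k:ℕ)+i) = Q (dprod (Xv a 1) ((k:ℕ)+i)) := by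
                rw [ringHom_dprod]
              have hgi := hgen (padd k i)
              rw [show ((padd k i : ℕ+) : ℕ) = (k:ℕ) + i from rfl] at hgi
              rw [this, ← hgi]
              push_cast
              ring
      rw [hL, Finset.mul_sum, sub_eq_zero]
      refine Finset.sum_congr rfl fun i hi => ?_
      rw [Finset.mem_range] at hi
      rw [map_nsmul, nsmul_eq_mul]
      have hc := coeff_nat (k:ℕ) (l:ℕ) i (by omega)
      have hcQ := congrArg (fun n : ℕ => ((n : ℕ) : MvPolynomial (A × ℕ+) ℤ ⧸ J)) hc
      push_cast at hcQ ⊢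
      linear_combination (Q (Xv a (padd k i))) * hcQ
    -- upgrade k!·l! to (k+l)!
    have hfac : ((k:ℕ) + (l:ℕ)).factorial
        = ((k:ℕ)+(l:ℕ)).choose (l:ℕ) * ((k:ℕ).factorial * (l:ℕ).factorial) := by
      rw [← Nat.add_choose_mul_factorial_mul_factorial (k:ℕ) (l:ℕ)]
      ring
    rw [hfac, mul_smul, nsmul_eq_mul]
    exact Ideal.mul_mem_left _ _ hmain
  · exact ⟨0, by simp⟩
  · rintro x y - - ⟨n, hn⟩ ⟨m, hm⟩
    refine ⟨n + m, ?_⟩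
    rw [smul_add]
    have hnd : ∀ (z : MvPolynomial (A × ℕ+) ℤ) (j : ℕ), j ≤ n + m → Nat.factorial j • z ∈ J →
        (n+m).factorial • z ∈ J := by
      intro z j hj hz
      obtain ⟨c, hc⟩ := Nat.factorial_dvd_factorial hj
      rw [hc, mul_comm, mul_smul, nsmul_eq_mul]
      exact Ideal.mul_mem_left _ _ hz
    exact Submodule.add_mem _ (hnd x n (by omega) hn) (hnd y m (by omega) hm)
  · rintro r x - ⟨n, hn⟩
    refine ⟨n, ?_⟩
    rw [smul_comm, smul_eq_mul]
    exact Ideal.mul_mem_left _ _ hn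
end

section
/- Let P be a nonempty dense linear order without endpoints, let m ∈ P, and let Q = {x ∈ P : m ≤ x}, regarded with the induced order as a first-order structure in the language with a single binary relation < (Q is a dense linear order with least element m and no greatest element). Let D₁, D₂ ⊆ Q^n. Then there is a bijection from D₁ onto D₂ whose graph is definable in the structure (Q, <) with parameters from Q if and only if, viewing D₁ and D₂ as subsets of P^n via the inclusion Q ⊆ P, there is a bijection from D₁ onto D₂ whose graph is definable in the structure (P, <) with parameters from P. -/
/-!
In a dense linear order, whether a tuple satisfies a formula with parameters depends only on its
order type over the parameters. This is proved by induction on the formula; the quantifier step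
needs every one-point extension of an order type to be realized again, which holds in a dense order
without endpoints, and in `Q = [m, ∞)` as soon as `m` is among the parameters. Consequently the
image in `P` of a set definable in `Q` is a union of order types over its parameters and `m`, and
the trace on `Q` of a set definable in `P` is a union of order types over its parameters clamped
to `[m, ∞)`; both are therefore definable. A definable bijection is transported along the
inclusion `Q^n ⊆ P^n` by conjugation, and its graph along the inclusion `Q^(n+n) ⊆ P^(n+n)`.
-/

open FirstOrder FirstOrder.Language

attribute [local instance] FirstOrder.Language.orderStructure

/-- A subset of `Q^n` is definable if it is defined by a first-order formula in the
language of orders with finitely many parameters from `Q`. -/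
def DLODefinable {Q : Type*} [LinearOrder Q] {n : ℕ} (s : Set (Fin n → Q)) : Prop :=
  ∃ A : Set Q, A.Finite ∧ A.Definable Language.order s

/-- The graph of `f` restricted to `D₁`, as a subset of `Q^(n+m)`. -/
def graphOn {Q : Type*} {n m : ℕ} (D₁ : Set (Fin n → Q))
    (f : (Fin n → Q) → (Fin m → Q)) : Set (Fin (n + m) → Q) :=
  {z | ∃ x ∈ D₁, z = Fin.append x (f x)}

/-- A definable bijection from `D₁ ⊆ Q^n` onto `D₂ ⊆ Q^m`: a bijection from `D₁` onto `D₂`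
whose graph is a definable subset of `Q^(n+m)`. -/
def DefBij {Q : Type*} [LinearOrder Q] {n m : ℕ} (D₁ : Set (Fin n → Q))
    (D₂ : Set (Fin m → Q)) : Prop :=
  ∃ f : (Fin n → Q) → (Fin m → Q), Set.BijOn f D₁ D₂ ∧ DLODefinable (graphOn D₁ f)

open Function

section OrderType

variable {M : Type*} [LinearOrder M] {γ : Type*} {w w' : γ → M}

def SameOrderType (w w' : γ → M) : Prop :=
  ∀ i j, w i ≤ w j ↔ w' i ≤ w' j

theorem SameOrderType.symm (h : SameOrderType w w') : SameOrderType w' w :=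
  fun i j => (h i j).symm

theorem SameOrderType.comp (h : SameOrderType w w') {δ : Type*} (e : δ → γ) :
    SameOrderType (w ∘ e) (w' ∘ e) :=
  fun i j => h (e i) (e j)

theorem SameOrderType.lt_iff (h : SameOrderType w w') (i j : γ) : w i < w j ↔ w' i < w' j := by
  simp only [← not_le, h j i]

theorem StrictMono.sameOrderType_comp_iff {N : Type*} [LinearOrder N] {f : M → N}
    (hf : StrictMono f) : SameOrderType (f ∘ w) (f ∘ w') ↔ SameOrderType w w' := by
  simp only [SameOrderType, comp_apply, hf.le_iff_le]

theorem SameOrderType.of_max (c : M)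
    (h : SameOrderType (fun i => max c (w i)) (fun i => max c (w' i)))
    (hw : ∀ i, (w i = w' i ∧ w i < c) ∨ (c ≤ w i ∧ c ≤ w' i)) : SameOrderType w w' := by
  intro i j
  rcases hw i with ⟨hi, hic⟩ | ⟨hi, hi'⟩ <;> rcases hw j with ⟨hj, hjc⟩ | ⟨hj, hj'⟩
  · rw [hi, hj]
  · exact iff_of_true (hic.le.trans hj) ((hi ▸ hic).le.trans hj')
  · exact iff_of_false (hjc.trans_le hi).not_ge ((hj ▸ hjc).trans_le hi').not_ge
  · simpa only [max_eq_right hi, max_eq_right hi', max_eq_right hj, max_eq_right hj'] using h i j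

theorem SameOrderType.exists_option_elim [DenselyOrdered M] [NoMinOrder M] [NoMaxOrder M]
    [Finite γ] (h : SameOrderType w w') (a : M) :
    ∃ a', SameOrderType (fun o : Option γ => o.elim a w) (fun o => o.elim a' w') := by
  classical
  have := Fintype.ofFinite γ
  by_cases ha : ∃ i, w i = a
  · obtain ⟨i, rfl⟩ := ha
    refine ⟨w' i, ?_⟩
    have hi : ∀ u : γ → M, (fun o : Option γ => o.elim (u i) u) = u ∘ (·.getD i) :=
      fun u => funext fun o => by cases o <;> rfl
    rw [hi w, hi w']
    exact h.comp _
  push Not at ha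
  obtain ⟨c, hlo, hhi⟩ := Order.exists_between_finsets (nonem := ⟨a⟩)
    ((Finset.univ.filter (w · < a)).image w') ((Finset.univ.filter (a < w ·)).image w') (by
      simp only [Finset.mem_image, Finset.mem_filter, Finset.mem_univ, true_and]
      rintro _ ⟨i, hi, rfl⟩ _ ⟨j, hj, rfl⟩
      exact (h.lt_iff i j).1 (hi.trans hj))
  have hside : ∀ i, (w i < a ∧ w' i < c) ∨ (a < w i ∧ c < w' i) := by
    intro i
    rcases (ha i).lt_or_gt with hi | hi
    · exact Or.inl ⟨hi, hlo _ (Finset.mem_image_of_mem _ (by simpa using hi))⟩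
    · exact Or.inr ⟨hi, hhi _ (Finset.mem_image_of_mem _ (by simpa using hi))⟩
  refine ⟨c, ?_⟩
  rintro (_ | i) (_ | j)
  · exact iff_of_true le_rfl le_rfl
  · rcases hside j with ⟨h₁, h₂⟩ | ⟨h₁, h₂⟩
    · exact iff_of_false h₁.not_ge h₂.not_ge
    · exact iff_of_true h₁.le h₂.le
  · rcases hside i with ⟨h₁, h₂⟩ | ⟨h₁, h₂⟩
    · exact iff_of_true h₁.le h₂.le
    · exact iff_of_false h₁.not_ge h₂.not_ge
  · exact h i j

theorem SameOrderType.exists_option_elim_Ici {P : Type*} [LinearOrder P] [DenselyOrdered P]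
    [NoMinOrder P] [NoMaxOrder P] [Finite γ] {m : P} {w w' : γ → {x : P // m ≤ x}}
    (h : SameOrderType w w') {i₀ : γ} (hi₀ : (w i₀ : P) = m) (a : {x : P // m ≤ x}) :
    ∃ a', SameOrderType (fun o : Option γ => o.elim a w) (fun o => o.elim a' w') := by
  have hval : StrictMono (Subtype.val : {x : P // m ≤ x} → P) := Subtype.strictMono_coe _
  obtain ⟨b, hb⟩ := ((hval.sameOrderType_comp_iff).2 h).exists_option_elim (a : P)
  have hmb : m ≤ b := (w' i₀).2.trans ((hb (some i₀) none).1 (hi₀.trans_le a.2))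
  refine ⟨⟨b, hmb⟩, hval.sameOrderType_comp_iff.1 ?_⟩
  convert hb using 1 <;> funext o <;> cases o <;> rfl

theorem SameOrderType.sum_elim_snoc {α : Type*} {k : ℕ} {v v' : α → M} {xs xs' : Fin k → M}
    {a a' : M} (h : SameOrderType (fun o : Option (α ⊕ Fin k) => o.elim a (Sum.elim v xs))
      (fun o => o.elim a' (Sum.elim v' xs'))) :
    SameOrderType (Sum.elim v (Fin.snoc xs a)) (Sum.elim v' (Fin.snoc xs' a')) := by
  let e : α ⊕ Fin (k + 1) → Option (α ⊕ Fin k) :=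
    Sum.elim (fun b => some (Sum.inl b)) (Fin.snoc (fun j => some (Sum.inr j)) none)
  have he : ∀ (u : α → M) (ys : Fin k → M) (b : M),
      Sum.elim u (Fin.snoc ys b) =
        (fun o : Option (α ⊕ Fin k) => o.elim b (Sum.elim u ys)) ∘ e := by
    intro u ys b
    funext p
    rcases p with c | j
    · rfl
    · refine Fin.lastCases ?_ (fun j => ?_) j <;> simp [e]
  rw [he, he]
  exact h.comp e

end OrderType

section Realize

variable {M : Type*} [LinearOrder M] {α : Type*}

def ExtendsOrderType (v v' : α → M) : Prop :=
  ∀ (k : ℕ) (xs xs' : Fin k → M), SameOrderType (Sum.elim v xs) (Sum.elim v' xs') →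
    ∀ a, ∃ a', SameOrderType (Sum.elim v (Fin.snoc xs a)) (Sum.elim v' (Fin.snoc xs' a'))

theorem extendsOrderType_of_dlo [DenselyOrdered M] [NoMinOrder M] [NoMaxOrder M] [Finite α]
    (v v' : α → M) : ExtendsOrderType v v' :=
  fun _ _ _ h a => (h.exists_option_elim a).imp fun _ => SameOrderType.sum_elim_snoc

theorem extendsOrderType_Ici {P : Type*} [LinearOrder P] [DenselyOrdered P] [NoMinOrder P]
    [NoMaxOrder P] [Finite α] {m : P} {v : α → {x : P // m ≤ x}} {i₀ : α} (hi₀ : (v i₀ : P) = m)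
    (v' : α → {x : P // m ≤ x}) : ExtendsOrderType v v' :=
  fun _ _ _ h a => (h.exists_option_elim_Ici (i₀ := Sum.inl i₀) hi₀ a).imp
    fun _ => SameOrderType.sum_elim_snoc

theorem FirstOrder.Language.Term.exists_eq_var_of_order (t : Language.order.Term α) :
    ∃ i, t = Term.var i := by
  cases t with
  | var i => exact ⟨i, rfl⟩
  | func f _ => exact isEmptyElim f

theorem FirstOrder.Language.BoundedFormula.realize_iff_of_sameOrderType {v v' : α → M}
    (h : ExtendsOrderType v v') (h' : ExtendsOrderType v' v) {k : ℕ}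
    (φ : Language.order.BoundedFormula α k) {xs xs' : Fin k → M}
    (hxs : SameOrderType (Sum.elim v xs) (Sum.elim v' xs')) :
    φ.Realize v xs ↔ φ.Realize v' xs' := by
  induction φ with
  | falsum => exact Iff.rfl
  | equal t₁ t₂ =>
    obtain ⟨i, rfl⟩ := Term.exists_eq_var_of_order t₁
    obtain ⟨j, rfl⟩ := Term.exists_eq_var_of_order t₂
    simp only [BoundedFormula.Realize, Term.realize_var, le_antisymm_iff, hxs i j, hxs j i]
  | rel R ts =>
    cases R
    obtain ⟨i, hi⟩ := Term.exists_eq_var_of_order (ts 0)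
    obtain ⟨j, hj⟩ := Term.exists_eq_var_of_order (ts 1)
    change (ts 0).realize _ ≤ (ts 1).realize _ ↔ (ts 0).realize _ ≤ (ts 1).realize _
    simp only [hi, hj, Term.realize_var, hxs i j]
  | imp _ _ ih₁ ih₂ => simp only [BoundedFormula.realize_imp, ih₁ hxs, ih₂ hxs]
  | all _ ih =>
    simp only [BoundedFormula.realize_all]
    refine ⟨fun H a' => ?_, fun H a => ?_⟩
    · obtain ⟨a, ha⟩ := h' _ _ _ hxs.symm a'
      exact (ih ha.symm).1 (H a)
    · obtain ⟨a', ha⟩ := h _ _ _ hxs a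
      exact (ih ha).2 (H a')

theorem FirstOrder.Language.Formula.realize_iff_of_sameOrderType {v v' : α → M}
    (h : ExtendsOrderType v v') (h' : ExtendsOrderType v' v) (φ : Language.order.Formula α)
    (hv : SameOrderType v v') :
    φ.Realize v ↔ φ.Realize v' :=
  BoundedFormula.realize_iff_of_sameOrderType h h' φ <| by
    rintro (i | i) (j | j)
    exacts [hv i j, j.elim0, i.elim0, i.elim0]

end Realize

section Definability

variable {M : Type*} [LinearOrder M] {α : Type*} {k : ℕ}

theorem definable_setOf_sum_elim_le (v : α → M) (i j : α ⊕ Fin k) :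
    (Set.range v).Definable Language.order {x : Fin k → M | Sum.elim v x i ≤ Sum.elim v x j} := by
  let t : α ⊕ Fin k → Language.order.Term ((Set.range v ⊕ Fin k) ⊕ Fin 0) :=
    fun p => Term.var (Sum.inl (Sum.map (Set.rangeFactorization v) id p))
  refine Set.definable_iff_exists_formula_sum.2 ⟨Term.le (t i) (t j), ?_⟩
  ext x
  have ht : ∀ p, (t p).realize (Sum.elim (Sum.elim Subtype.val x) default) = Sum.elim v x p := by
    rintro (b | l) <;> rfl
  change _ ≤ _ ↔ (t i).realize _ ≤ (t j).realize _
  rw [ht, ht]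

theorem dloDefinable_of_sameOrderType_invariant [Finite α] (v : α → M) {S : Set (Fin k → M)}
    (hS : ∀ x y, SameOrderType (Sum.elim v x) (Sum.elim v y) → x ∈ S → y ∈ S) :
    DLODefinable S := by
  classical
  refine ⟨Set.range v, Set.finite_range v, ?_⟩
  let T : (Fin k → M) → α ⊕ Fin k → α ⊕ Fin k → Prop :=
    fun x i j => Sum.elim v x i ≤ Sum.elim v x j
  have hST : S = ⋃ R : T '' S, ⋂ i, ⋂ j, {x | T x i j ↔ R.1 i j} := by
    ext y
    simp only [Set.mem_iUnion, Set.mem_iInter, Set.mem_ofPred_eq, Subtype.exists, Set.mem_image,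
      exists_prop]
    refine ⟨fun hy => ⟨T y, ⟨y, hy, rfl⟩, fun _ _ => Iff.rfl⟩, ?_⟩
    rintro ⟨_, ⟨x, hx, rfl⟩, hxy⟩
    exact hS x y (fun i j => (hxy i j).symm) hx
  rw [hST]
  refine Set.definable_iUnion_of_finite fun R => Set.definable_iInter_of_finite fun i =>
    Set.definable_iInter_of_finite fun j => ?_
  by_cases hR : R.1 i j
  · simpa only [hR, iff_true] using definable_setOf_sum_elim_le v i j
  · simp only [hR, iff_false]
    exact (definable_setOf_sum_elim_le v i j).compl

end Definability

section Transfer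

variable {P : Type*} [LinearOrder P] [DenselyOrdered P] [NoMinOrder P] [NoMaxOrder P] {m : P}
  {k : ℕ}

theorem DLODefinable.image_subtypeVal {G : Set (Fin k → {x : P // m ≤ x})}
    (hG : DLODefinable G) :
    DLODefinable ((fun (x : Fin k → {x : P // m ≤ x}) i => (x i : P)) '' G) := by
  obtain ⟨A, hA, hdef⟩ := hG
  let bot : {x : P // m ≤ x} := ⟨m, le_rfl⟩
  have : Finite ↥(insert bot A) := hA.insert bot
  obtain ⟨φ, hφ⟩ := Set.definable_iff_exists_formula_sum.1 (hdef.mono (Set.subset_insert bot A))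
  refine dloDefinable_of_sameOrderType_invariant (fun b : ↥(insert bot A) => (b : P)) ?_
  rintro _ ys hsame ⟨x, hx, rfl⟩
  let i₀ : ↥(insert bot A) ⊕ Fin k := Sum.inl ⟨bot, Set.mem_insert bot A⟩
  have hm : ∀ i, m ≤ ys i := fun i => (hsame i₀ (Sum.inr i)).1 (x i).2
  refine ⟨fun i => ⟨ys i, hm i⟩, ?_, rfl⟩
  rw [hφ] at hx ⊢
  refine (Formula.realize_iff_of_sameOrderType (extendsOrderType_Ici (i₀ := i₀) rfl _)
    (extendsOrderType_Ici (i₀ := i₀) rfl _) φ ?_).1 hx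
  rw [← (Subtype.strictMono_coe _).sameOrderType_comp_iff, Sum.comp_elim, Sum.comp_elim]
  exact hsame

theorem DLODefinable.preimage_subtypeVal {S : Set (Fin k → P)} (hS : DLODefinable S) :
    DLODefinable ((fun (x : Fin k → {x : P // m ≤ x}) i => (x i : P)) ⁻¹' S) := by
  obtain ⟨A, hA, hdef⟩ := hS
  have : Finite A := hA
  obtain ⟨φ, hφ⟩ := Set.definable_iff_exists_formula_sum.1 hdef
  let clamp : A → {x : P // m ≤ x} := fun a => ⟨max m a, le_max_left m a⟩
  refine dloDefinable_of_sameOrderType_invariant clamp fun z z' hsame hz => ?_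
  rw [Set.mem_preimage, hφ] at hz ⊢
  refine (Formula.realize_iff_of_sameOrderType (extendsOrderType_of_dlo _ _)
    (extendsOrderType_of_dlo _ _) φ (SameOrderType.of_max m ?_ ?_)).1 hz
  · have hclamp : ∀ z : Fin k → {x : P // m ≤ x},
        (fun p => max m (Sum.elim Subtype.val (fun i => (z i : P)) p)) =
          Subtype.val ∘ Sum.elim clamp z := by
      intro z
      funext p
      rcases p with a | i
      · rfl
      · exact max_eq_right (z i).2
    rw [hclamp, hclamp, (Subtype.strictMono_coe _).sameOrderType_comp_iff]
    exact hsame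
  · rintro (a | i)
    · by_cases ha : (a : P) < m
      · exact Or.inl ⟨rfl, ha⟩
      · exact Or.inr ⟨not_lt.1 ha, not_lt.1 ha⟩
    · exact Or.inr ⟨(z i).2, (z' i).2⟩

end Transfer

theorem Fin.comp_append {β γ : Type*} {n k : ℕ} (φ : β → γ) (x : Fin n → β) (y : Fin k → β) :
    φ ∘ Fin.append x y = Fin.append (φ ∘ x) (φ ∘ y) := by
  funext i
  refine Fin.addCases (fun i => ?_) (fun i => ?_) i <;> simp

theorem Function.Injective.bijOn_invFun_image {β γ : Type*} [Nonempty β] {ι : β → γ}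
    (hι : Injective ι) (s : Set β) : Set.BijOn (invFun ι) (ι '' s) s :=
  hι.bijOn_image.symm ⟨fun _ ⟨x, _, hx⟩ => invFun_eq ⟨x, hx⟩, fun x _ => leftInverse_invFun hι x⟩

theorem graphOn_image_eq {Q P : Type*} {n k : ℕ} {φ : Q → P} {D : Set (Fin n → Q)}
    {f : (Fin n → Q) → (Fin k → Q)} {g : (Fin n → P) → (Fin k → P)}
    (hfg : ∀ x ∈ D, (fun i => φ (f x i)) = g (fun i => φ (x i))) :
    graphOn ((fun x i => φ (x i)) '' D) g = (fun z i => φ (z i)) '' graphOn D f := by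
  ext z
  constructor
  · rintro ⟨_, ⟨x, hx, rfl⟩, rfl⟩
    exact ⟨_, ⟨x, hx, rfl⟩, by rw [← hfg x hx]; exact Fin.comp_append φ x (f x)⟩
  · rintro ⟨_, ⟨x, hx, rfl⟩, rfl⟩
    exact ⟨_, ⟨x, hx, rfl⟩, by rw [← hfg x hx]; exact Fin.comp_append φ x (f x)⟩

theorem dlo_with_endpoint_defBij_iff_general {P : Type*} [LinearOrder P] [DenselyOrdered P]
    [NoMinOrder P] [NoMaxOrder P] (m : P) {n : ℕ}
    (D₁ D₂ : Set (Fin n → {x : P // m ≤ x})) :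
    DefBij D₁ D₂ ↔
      DefBij ((fun (x : Fin n → {x : P // m ≤ x}) (i : Fin n) => (x i : P)) '' D₁)
        ((fun (x : Fin n → {x : P // m ≤ x}) (i : Fin n) => (x i : P)) '' D₂) := by
  have : Nonempty {x : P // m ≤ x} := ⟨⟨m, le_rfl⟩⟩
  set ι := fun (x : Fin n → {x : P // m ≤ x}) (i : Fin n) => (x i : P)
  have hι : Injective ι := Subtype.val_injective.comp_left
  have hι₂ : Injective fun (z : Fin (n + n) → {x : P // m ≤ x}) i => (z i : P) :=
    Subtype.val_injective.comp_left
  constructor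
  · rintro ⟨f, hf, hdef⟩
    let g := ι ∘ f ∘ invFun ι
    have hfg : ∀ x ∈ D₁, ι (f x) = g (ι x) := fun x _ => by
      simp only [g, comp_apply, leftInverse_invFun hι x]
    refine ⟨g, hι.bijOn_image.comp (hf.comp (hι.bijOn_invFun_image D₁)), ?_⟩
    rw [graphOn_image_eq hfg]
    exact hdef.image_subtypeVal
  · rintro ⟨g, hg, hdef⟩
    let f := invFun ι ∘ g ∘ ι
    have hfg : ∀ x ∈ D₁, ι (f x) = g (ι x) := fun x hx =>
      invFun_eq ((hg.mapsTo (Set.mem_image_of_mem ι hx)).imp fun _ => And.right)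
    refine ⟨f, (hι.bijOn_invFun_image D₂).comp (hg.comp hι.bijOn_image), ?_⟩
    rw [← hι₂.preimage_image (graphOn D₁ f), ← graphOn_image_eq hfg]
    exact hdef.preimage_subtypeVal

/-- For a DLO `P` without endpoints and the DLO `Q = [m, ∞) ⊆ P` with least element `m`,
two subsets of `Q^n` are in definable bijection in the structure `(Q, <)` iff they are in
definable bijection in `(P, <)` when viewed as subsets of `P^n`. -/
theorem dlo_with_endpoint_defBij_iff {P : Type*} [LinearOrder P] [DenselyOrdered P]
    [NoMinOrder P] [NoMaxOrder P] [Nonempty P] (m : P) {n : ℕ}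
    (D₁ D₂ : Set (Fin n → {x : P // m ≤ x})) :
    DefBij D₁ D₂ ↔
      DefBij ((fun (x : Fin n → {x : P // m ≤ x}) (i : Fin n) => (x i : P)) '' D₁)
        ((fun (x : Fin n → {x : P // m ≤ x}) (i : Fin n) => (x i : P)) '' D₂) :=
  dlo_with_endpoint_defBij_iff_general m D₁ D₂
end

section
/- Let Q be a nonempty dense linear order without endpoints and let D ⊆ Q^n be a nonempty definable set. Then D admits a finite partition into pairwise disjoint definable sets, each of which is in definable bijection with a canonical related set: a set of the form {x ∈ Q^N : x_1 > x_2 > ⋯ > x_N, and x_{s_j} > a_j whenever s_j ≥ 1 and a_j > x_{s_j + 1} whenever s_j < N, for each 1 ≤ j ≤ k}, for some N ≥ 0, some k ≥ 0, some strictly decreasing parameters a_1 > a_2 > ⋯ > a_k in Q, and some weakly increasing positions 0 ≤ s_1 ≤ s_2 ≤ ⋯ ≤ s_k ≤ N (with N = 0 giving the one-point set Q^0, so singleton pieces are allowed). -/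
open FirstOrder FirstOrder.Language

attribute [local instance] FirstOrder.Language.orderStructure

/-- The canonical related set determined by dimension `N`, a strictly decreasing parameter
tuple `a : Fin k → Q` and weakly increasing positions `s : Fin k → ℕ` with `s j ≤ N`:
the set `{x ∈ Q^N | x 0 > x 1 > ⋯ > x (N-1)}` with `x (s j - 1) > a j` whenever `1 ≤ s j`
and `a j > x (s j)` whenever `s j < N`. -/
def canonicalRelated {Q : Type*} [LinearOrder Q] (N k : ℕ) (a : Fin k → Q) (s : Fin k → ℕ)
    (hsN : ∀ j, s j ≤ N) : Set (Fin N → Q) :=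
  {x | StrictAnti x ∧ ∀ j : Fin k,
    (∀ h : 1 ≤ s j, a j < x ⟨s j - 1, by have := hsN j; omega⟩) ∧
    (∀ h : s j < N, x ⟨s j, h⟩ < a j)}

/-! In a dense linear order without endpoints, a formula with parameters `a` cannot tell apart
two tuples `x, y` such that `(x, a)` and `(y, a)` have the same order type: this is an induction
on the formula, whose quantifier step extends an order-type equality by one point, using density
and the absence of endpoints. So a definable set is a finite union of order-type classes over its
parameters. On the class of `x₀`, keeping one coordinate for each value of `x₀` that is not a
parameter, in decreasing order of these values, is a bijection onto the class of a strictly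
decreasing tuple avoiding the parameters, and that class is a canonical related set. -/

section OrderType

variable {Q : Type*} [LinearOrder Q]

def orderType {ι : Type*} (v : ι → Q) : ι → ι → Prop := fun i j => v i < v j

variable {ι κ : Type*} {v w : ι → Q}

theorem orderType_eq_iff : orderType v = orderType w ↔ ∀ i j, v i < v j ↔ w i < w j := by
  simp only [orderType, funext_iff, eq_iff_iff]

theorem orderType_comp_eq (h : orderType v = orderType w) (g : κ → ι) :
    orderType (v ∘ g) = orderType (w ∘ g) :=
  congrArg (fun R i j => R (g i) (g j)) h

theorem le_iff_le_of_orderType_eq (h : orderType v = orderType w) (i j : ι) :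
    v i ≤ v j ↔ w i ≤ w j := by
  rw [← not_lt, ← not_lt, orderType_eq_iff.1 h]

theorem eq_iff_eq_of_orderType_eq (h : orderType v = orderType w) (i j : ι) :
    v i = v j ↔ w i = w j := by
  rw [le_antisymm_iff, le_antisymm_iff, le_iff_le_of_orderType_eq h, le_iff_le_of_orderType_eq h]

theorem orderType_eq_iff_strictAnti [LinearOrder ι] (hw : StrictAnti w) :
    orderType v = orderType w ↔ StrictAnti v := by
  refine ⟨fun h i j hij => (orderType_eq_iff.1 h j i).2 (hw hij), fun hv => ?_⟩
  exact orderType_eq_iff.2 fun i j => hv.lt_iff_gt.trans hw.lt_iff_gt.symm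

theorem orderType_sumElim_eq_iff {u v : ι → Q} {a : κ → Q} :
    orderType (Sum.elim u a) = orderType (Sum.elim v a) ↔
      orderType u = orderType v ∧ ∀ i j, (a j < u i ↔ a j < v i) ∧ (u i < a j ↔ v i < a j) := by
  simp only [orderType_eq_iff, Sum.forall, Sum.elim_inl, Sum.elim_inr, iff_self, implies_true,
    and_true, forall_and, and_assoc]
  exact and_congr_right' (and_congr_left' forall_comm)

def orderTypeClass {n : ℕ} (a : κ → Q) (x₀ : Fin n → Q) : Set (Fin n → Q) :=
  {x | orderType (Sum.elim x a) = orderType (Sum.elim x₀ a)}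

end OrderType

section Extension

variable {Q : Type*} [LinearOrder Q] [DenselyOrdered Q] [NoMinOrder Q] [NoMaxOrder Q] [Nonempty Q]
  {ι : Type*} [Finite ι] {V W : ι → Q}

theorem exists_orderType_optionElim_eq (h : orderType V = orderType W) (b : Q) :
    ∃ c, orderType (Option.elim' b V) = orderType (Option.elim' c W) := by
  have := Fintype.ofFinite ι
  suffices ∃ c, ∀ i, (b < V i ↔ c < W i) ∧ (V i < b ↔ W i < c) by
    obtain ⟨c, hc⟩ := this
    refine ⟨c, orderType_eq_iff.2 ?_⟩
    simp only [Option.forall, Option.elim'_none, Option.elim'_some, lt_self_iff_false, iff_self,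
      true_and, fun i => (hc i).1, fun i => (hc i).2, implies_true, orderType_eq_iff.1 h]
  by_cases hb : ∃ i₀, V i₀ = b
  · obtain ⟨i₀, rfl⟩ := hb
    exact ⟨W i₀, fun i => ⟨orderType_eq_iff.1 h i₀ i, orderType_eq_iff.1 h i i₀⟩⟩
  simp only [not_exists] at hb
  obtain ⟨c, hlo, hhi⟩ := Order.exists_between_finsets
    (({i | V i < b} : Finset ι).image W) (({i | b < V i} : Finset ι).image W) <| by
      simp only [Finset.mem_image, Finset.mem_filter, Finset.mem_univ, true_and]
      rintro _ ⟨i, hi, rfl⟩ _ ⟨j, hj, rfl⟩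
      exact (orderType_eq_iff.1 h i j).1 (hi.trans hj)
  simp only [Finset.mem_image, Finset.mem_filter, Finset.mem_univ, true_and,
    forall_exists_index, and_imp, forall_apply_eq_imp_iff₂] at hlo hhi
  refine ⟨c, fun i => ⟨⟨hhi i, fun hc => ?_⟩, ⟨hlo i, fun hc => ?_⟩⟩⟩
  · exact (Ne.lt_or_gt (hb i)).resolve_left fun hi => (hlo i hi).asymm hc
  · exact (Ne.lt_or_gt (hb i)).resolve_right fun hi => (hhi i hi).asymm hc

theorem exists_orderType_snoc_eq {β : Type*} {m : ℕ} [Finite β] {v w : β → Q} {xs ys : Fin m → Q}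
    (h : orderType (Sum.elim v xs) = orderType (Sum.elim w ys)) (b : Q) :
    ∃ c, orderType (Sum.elim v (Fin.snoc xs b)) = orderType (Sum.elim w (Fin.snoc ys c)) := by
  have hsnoc : ∀ (u : β → Q) (zs : Fin m → Q) (d : Q), Sum.elim u (Fin.snoc zs d) =
      Option.elim' d (Sum.elim u zs) ∘
        Sum.elim (some ∘ Sum.inl) (Fin.snoc (some ∘ Sum.inr) none) := by
    intro u zs d
    rw [Sum.comp_elim, Fin.comp_snoc]
    rfl
  obtain ⟨c, hc⟩ := exists_orderType_optionElim_eq h b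
  exact ⟨c, by rw [hsnoc, hsnoc]; exact orderType_comp_eq hc _⟩

end Extension

section Invariance

variable {Q : Type*} [LinearOrder Q]

instance : Language.order.OrderedStructure Q := ⟨fun _ => Iff.rfl⟩

theorem order_term_eq_var {α : Type*} (t : Language.order.Term α) : ∃ p, t = Term.var p := by
  cases t with
  | var p => exact ⟨p, rfl⟩
  | func f _ => exact isEmptyElim f

variable [DenselyOrdered Q] [NoMinOrder Q] [NoMaxOrder Q] [Nonempty Q]

theorem realize_iff_of_orderType_eq {β : Type*} [Finite β] {m : ℕ}
    (φ : Language.order.BoundedFormula β m) {v w : β → Q} {xs ys : Fin m → Q}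
    (h : orderType (Sum.elim v xs) = orderType (Sum.elim w ys)) :
    φ.Realize v xs ↔ φ.Realize w ys := by
  induction φ with
  | falsum => rfl
  | equal t₁ t₂ =>
    obtain ⟨p, rfl⟩ := order_term_eq_var t₁
    obtain ⟨q, rfl⟩ := order_term_eq_var t₂
    exact eq_iff_eq_of_orderType_eq h p q
  | rel R ts =>
    cases R
    obtain ⟨p, hp⟩ := order_term_eq_var (ts 0)
    obtain ⟨q, hq⟩ := order_term_eq_var (ts 1)
    change (ts 0).realize _ ≤ (ts 1).realize _ ↔ (ts 0).realize _ ≤ (ts 1).realize _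
    rw [hp, hq]
    exact le_iff_le_of_orderType_eq h p q
  | imp _ _ ih₁ ih₂ => exact imp_congr (ih₁ h) (ih₂ h)
  | all _ ih =>
    refine ⟨fun hv c => ?_, fun hw b => ?_⟩
    · obtain ⟨b, hb⟩ := exists_orderType_snoc_eq h.symm c
      exact (ih hb.symm).1 (hv b)
    · obtain ⟨c, hc⟩ := exists_orderType_snoc_eq h b
      exact (ih hc).2 (hw c)

end Invariance

section Definability

variable {Q : Type*} [LinearOrder Q] {κ : Type*} [Finite κ] {n : ℕ}

theorem Set.Definable.mem_iff_mem_of_orderType_eq [DenselyOrdered Q] [NoMinOrder Q]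
    [NoMaxOrder Q] [Nonempty Q] {a : κ → Q} {D : Set (Fin n → Q)}
    (hD : (Set.range a).Definable Language.order D) {x y : Fin n → Q}
    (h : orderType (Sum.elim x a) = orderType (Sum.elim y a)) : x ∈ D ↔ y ∈ D := by
  obtain ⟨φ, rfl⟩ := Set.definable_iff_exists_formula_sum.1 hD
  choose idx hidx using fun q : Set.range a => q.2
  let g : (Set.range a ⊕ Fin n) ⊕ Fin 0 → Fin n ⊕ κ :=
    Sum.elim (Sum.elim (Sum.inr ∘ idx) Sum.inl) finZeroElim
  have hg : ∀ z : Fin n → Q, Sum.elim (Sum.elim (↑) z) default = Sum.elim z a ∘ g := by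
    intro z
    ext ((q | i) | k)
    exacts [(hidx q).symm, rfl, k.elim0]
  exact realize_iff_of_orderType_eq φ (by rw [hg, hg]; exact orderType_comp_eq h g)

theorem definable_orderTypeClass (a : κ → Q) (x₀ : Fin n → Q) :
    (Set.range a).Definable Language.order (orderTypeClass a x₀) := by
  have hlt : ∀ p q : Fin n ⊕ κ, (Set.range a).Definable Language.order
      {x : Fin n → Q | Sum.elim x a p < Sum.elim x a q} := by
    let τ : Fin n ⊕ κ → Set.range a ⊕ Fin n := Sum.elim Sum.inr fun j => Sum.inl ⟨a j, j, rfl⟩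
    intro p q
    refine Set.definable_iff_exists_formula_sum.2
      ⟨(Term.var (Sum.inl (τ p))).lt (Term.var (Sum.inl (τ q))), ?_⟩
    ext x
    rcases p with p | p <;> rcases q with q | q <;> simp [Formula.Realize, τ]
  have hclass : orderTypeClass a x₀ = ⋂ pq : (Fin n ⊕ κ) × (Fin n ⊕ κ),
      {x | Sum.elim x a pq.1 < Sum.elim x a pq.2 ↔ Sum.elim x₀ a pq.1 < Sum.elim x₀ a pq.2} := by
    ext x
    simp [orderTypeClass, orderType_eq_iff]
  rw [hclass]
  refine Set.definable_iInter_of_finite fun ⟨p, q⟩ => ?_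
  by_cases hpq : Sum.elim x₀ a p < Sum.elim x₀ a q
  · simp only [hpq, iff_true]
    exact hlt p q
  · simp only [hpq, iff_false]
    exact (hlt p q).compl

theorem DLODefinable.graphOn_comp {N : ℕ} {D : Set (Fin n → Q)} (hD : DLODefinable D)
    (idx : Fin N → Fin n) : DLODefinable (graphOn D (· ∘ idx)) := by
  obtain ⟨A, hA, hD⟩ := hD
  have hgraph : graphOn D (· ∘ idx) = (· ∘ Fin.castAdd N) ⁻¹' D ∩
      ⋂ r, (· ∘ ![Fin.natAdd n r, Fin.castAdd N (idx r)]) ⁻¹' {z : Fin 2 → Q | z 0 = z 1} := by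
    ext z
    simp only [graphOn, Set.mem_ofPred_eq, Set.mem_inter_iff, Set.mem_preimage, Set.mem_iInter]
    constructor
    · rintro ⟨x, hx, rfl⟩
      simpa [Function.comp_def, Fin.append_left] using hx
    · rintro ⟨hleft, hright⟩
      refine ⟨_, hleft, ?_⟩
      conv_lhs => rw [← Fin.append_castAdd_natAdd (f := z)]
      congr 1
      ext r
      simpa using hright r
  rw [hgraph]
  exact ⟨A, hA, (hD.preimage_comp _).inter <| Set.definable_iInter_of_finite fun r =>
    (Set.Definable.diagonal Language.order A).preimage_comp _⟩

end Definability

section Canonical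

open Finset

variable {Q : Type*} [LinearOrder Q] {N K : ℕ} {a : Fin K → Q} {s : Fin K → ℕ}
  {hsN : ∀ j, s j ≤ N}

theorem mem_canonicalRelated_iff {y : Fin N → Q} :
    y ∈ canonicalRelated N K a s hsN ↔
      StrictAnti y ∧ ∀ r j, (a j < y r ↔ (r : ℕ) < s j) ∧ (y r < a j ↔ s j ≤ r) := by
  refine ⟨fun ⟨hy, hbd⟩ => ⟨hy, fun r j => ?_⟩, fun ⟨hy, hpos⟩ => ⟨hy, fun j => ?_⟩⟩
  · have hgt (h : (r : ℕ) < s j) : a j < y r :=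
      ((hbd j).1 (by omega)).trans_le (hy.antitone (Fin.mk_le_mk.2 (by omega)))
    have hlt (h : s j ≤ r) : y r < a j :=
      (hy.antitone (Fin.mk_le_mk.2 h)).trans_lt ((hbd j).2 (by omega))
    exact ⟨⟨fun h => not_le.1 fun h' => (hlt h').asymm h, hgt⟩,
      ⟨fun h => not_lt.1 fun h' => (hgt h').asymm h, hlt⟩⟩
  · exact ⟨fun _ => (hpos _ j).1.2 (by rw [Fin.val_mk]; omega), fun _ => (hpos _ j).2.2 le_rfl⟩

theorem orderTypeClass_eq_canonicalRelated {y₀ : Fin N → Q}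
    (hy₀ : y₀ ∈ canonicalRelated N K a s hsN) :
    orderTypeClass a y₀ = canonicalRelated N K a s hsN := by
  obtain ⟨hanti, hpos⟩ := mem_canonicalRelated_iff.1 hy₀
  ext y
  simp only [orderTypeClass, Set.mem_ofPred_eq, orderType_sumElim_eq_iff,
    orderType_eq_iff_strictAnti hanti, mem_canonicalRelated_iff, hpos]

theorem StrictAnti.lt_apply_iff_lt_card {y : Fin N → Q} (hy : StrictAnti y) (t : Q) (r : Fin N) :
    t < y r ↔ (r : ℕ) < #{r' | t < y r'} := by
  constructor
  · intro h
    calc (r : ℕ) < #(Iic r) := by simp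
      _ ≤ #{r' | t < y r'} := card_le_card fun r' hr' => by
        simpa using h.trans_le (hy.antitone (mem_Iic.1 hr'))
  · intro h
    by_contra hle
    have : #{r' | t < y r'} ≤ #(Iio r) := card_le_card fun r' hr' => by
      simpa using hy.lt_iff_gt.1 ((not_lt.1 hle).trans_lt (mem_filter.1 hr').2)
    rw [Fin.card_Iio] at this
    omega

theorem exists_mem_canonicalRelated {y : Fin N → Q} (hy : StrictAnti y) (ha : Antitone a)
    (hne : ∀ r j, y r ≠ a j) :
    ∃ (s : Fin K → ℕ) (hsN : ∀ j, s j ≤ N), Monotone s ∧ y ∈ canonicalRelated N K a s hsN := by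
  refine ⟨fun j => #{r | a j < y r}, fun j => (card_filter_le _ _).trans (by simp),
    fun j j' hjj' => card_le_card fun r hr => ?_, mem_canonicalRelated_iff.2 ⟨hy, ?_⟩⟩
  · simp only [mem_filter, mem_univ, true_and] at hr ⊢
    exact (ha hjj').trans_lt hr
  · intro r j
    rw [← hy.lt_apply_iff_lt_card, ← not_lt, ← hy.lt_apply_iff_lt_card, not_lt,
      (hne r j).le_iff_lt]
    exact ⟨Iff.rfl, Iff.rfl⟩

end Canonical

section Bijection

variable {Q : Type*} [LinearOrder Q]

theorem bijOn_comp_orderTypeClass {κ : Type*} {n N : ℕ} (a : κ → Q) {x₀ : Fin n → Q}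
    {y₀ : Fin N → Q} {idx : Fin N → Fin n} {π : Fin n → Fin N ⊕ κ} (hy₀ : x₀ ∘ idx = y₀)
    (hx₀ : Sum.elim y₀ a ∘ π = x₀) :
    Set.BijOn (· ∘ idx) (orderTypeClass a x₀) (orderTypeClass a y₀) := by
  have hcomp : ∀ x : Fin n → Q, Sum.elim (x ∘ idx) a = Sum.elim x a ∘ Sum.map idx id := fun x =>
    (Sum.elim_comp_map ..).symm
  have hmaps : Set.MapsTo (· ∘ idx) (orderTypeClass a x₀) (orderTypeClass a y₀) := fun x hx => by
    simp only [orderTypeClass, Set.mem_ofPred_eq, ← hy₀, hcomp]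
    exact orderType_comp_eq hx _
  have hrecover : ∀ x ∈ orderTypeClass a x₀, Sum.elim (x ∘ idx) a ∘ π = x := fun x hx => by
    ext i
    have := congrFun hx₀ i
    rw [← hy₀, hcomp] at this
    rw [Function.comp_apply, hcomp]
    exact (eq_iff_eq_of_orderType_eq hx _ (Sum.inl i)).2 this
  refine ⟨hmaps, fun x hx x' hx' hxx' => ?_, fun y hy => ⟨Sum.elim y a ∘ π, ?_, ?_⟩⟩
  · rw [← hrecover x hx, ← hrecover x' hx', show x ∘ idx = x' ∘ idx from hxx']
  · have hext (z : Fin N → Q) :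
        Sum.elim (Sum.elim z a ∘ π) a = Sum.elim z a ∘ Sum.elim π Sum.inr := by
      rw [Sum.comp_elim]
      rfl
    simp only [orderTypeClass, Set.mem_ofPred_eq, ← hx₀, hext]
    exact orderType_comp_eq hy _
  · ext r
    have : Sum.elim y₀ a (π (idx r)) = y₀ r := (congrFun hx₀ (idx r)).trans (congrFun hy₀ r)
    exact (eq_iff_eq_of_orderType_eq hy _ (Sum.inl r)).2 this

end Bijection

section Partition

variable {Q : Type*} [LinearOrder Q]

theorem Set.Finite.exists_strictAnti_fin_range_eq {A : Set Q} (hA : A.Finite) :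
    ∃ (K : ℕ) (a : Fin K → Q), StrictAnti a ∧ Set.range a = A := by
  let f := hA.toFinset.orderEmbOfFin rfl
  refine ⟨_, f ∘ Fin.rev, f.strictMono.comp_strictAnti Fin.rev_strictAnti, ?_⟩
  rw [Fin.rev_surjective.range_comp, Finset.range_orderEmbOfFin, hA.coe_toFinset]

theorem exists_defBij_orderTypeClass_canonicalRelated {K n : ℕ} {a : Fin K → Q}
    (ha : StrictAnti a) (x₀ : Fin n → Q) :
    ∃ (N : ℕ) (s : Fin K → ℕ) (hsN : ∀ j, s j ≤ N), Monotone s ∧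
      DefBij (orderTypeClass a x₀) (canonicalRelated N K a s hsN) := by
  obtain ⟨N, y₀, hy₀, hrange⟩ :=
    ((Set.finite_range x₀).sdiff (t := Set.range a)).exists_strictAnti_fin_range_eq
  have hy₀_mem (r : Fin N) : y₀ r ∈ Set.range x₀ \ Set.range a := hrange ▸ Set.mem_range_self r
  choose idx hidx using fun r => (hy₀_mem r).1
  have hx₀_mem (i : Fin n) : x₀ i ∈ Set.range (Sum.elim y₀ a) := by
    rw [Set.Sum.elim_range, hrange, Set.sdiff_union_self]
    exact Or.inl (Set.mem_range_self i)
  choose π hπ using hx₀_mem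
  obtain ⟨s, hsN, hs, hy₀_can⟩ := exists_mem_canonicalRelated hy₀ ha.antitone
    fun r j h => (hy₀_mem r).2 ⟨j, h.symm⟩
  refine ⟨N, s, hsN, hs, (· ∘ idx), ?_,
    DLODefinable.graphOn_comp ⟨_, Set.finite_range a, definable_orderTypeClass a x₀⟩ idx⟩
  rw [← orderTypeClass_eq_canonicalRelated hy₀_can]
  exact bijOn_comp_orderTypeClass a (funext hidx) (funext hπ)

open Function in
theorem exists_fin_partition_fibers {α β : Type*} [Finite β] (f : α → β) {D : Set α}
    (hD : ∀ ⦃x y⦄, f x = f y → x ∈ D → y ∈ D) :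
    ∃ (p : ℕ) (parts : Fin p → Set α), Pairwise (Disjoint on parts) ∧ ⋃ i, parts i = D ∧
      ∀ i, ∃ x₀, parts i = {x | f x = f x₀} := by
  let e := Finite.equivFin (f '' D)
  refine ⟨_, fun i => {x | f x = e.symm i}, fun i j hij => ?_, ?_, fun i => ?_⟩
  · exact Set.disjoint_left.2 fun x hi hj => hij (e.symm.injective (Subtype.ext (hi.symm.trans hj)))
  · ext x
    simp only [Set.mem_iUnion, Set.mem_ofPred_eq]
    refine ⟨fun ⟨i, hi⟩ => ?_, fun hx => ⟨e ⟨f x, x, hx, rfl⟩, by rw [Equiv.symm_apply_apply]⟩⟩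
    obtain ⟨x₀, hx₀, h⟩ := (e.symm i).2
    exact hD (h.trans hi.symm) hx₀
  · obtain ⟨x₀, -, h⟩ := (e.symm i).2
    exact ⟨x₀, by rw [h]⟩

end Partition

theorem dlo_partition_into_related_general {Q : Type*} [LinearOrder Q] [DenselyOrdered Q]
    [NoMinOrder Q] [NoMaxOrder Q] [Nonempty Q] {n : ℕ} (D : Set (Fin n → Q))
    (hD : DLODefinable D) :
    ∃ (p : ℕ) (parts : Fin p → Set (Fin n → Q)),
      (∀ i j, i ≠ j → Disjoint (parts i) (parts j)) ∧
      (⋃ i, parts i) = D ∧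
      ∀ i, DLODefinable (parts i) ∧
        ∃ (N k : ℕ) (a : Fin k → Q) (s : Fin k → ℕ) (hsN : ∀ j, s j ≤ N),
          StrictAnti a ∧ Monotone s ∧ DefBij (parts i) (canonicalRelated N k a s hsN) := by
  obtain ⟨A, hA, hDA⟩ := hD
  obtain ⟨K, a, ha, rfl⟩ := hA.exists_strictAnti_fin_range_eq
  obtain ⟨p, parts, hdisj, hunion, hparts⟩ := exists_fin_partition_fibers
    (fun x => orderType (Sum.elim x a)) fun x y h => (hDA.mem_iff_mem_of_orderType_eq h).1
  refine ⟨p, parts, hdisj, hunion, fun i => ?_⟩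
  obtain ⟨x₀, hi⟩ := hparts i
  obtain ⟨N, s, hsN, hs, hbij⟩ := exists_defBij_orderTypeClass_canonicalRelated ha x₀
  rw [hi]
  exact ⟨⟨_, hA, definable_orderTypeClass a x₀⟩, N, K, a, s, hsN, ha, hs, hbij⟩

/-- Every nonempty definable subset of `Q^n` admits a finite partition into pairwise
disjoint definable sets, each in definable bijection with a canonical related set. -/
theorem dlo_partition_into_related {Q : Type*} [LinearOrder Q] [DenselyOrdered Q]
    [NoMinOrder Q] [NoMaxOrder Q] [Nonempty Q] {n : ℕ} (D : Set (Fin n → Q))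
    (hD : DLODefinable D) (hne : D.Nonempty) :
    ∃ (p : ℕ) (parts : Fin p → Set (Fin n → Q)),
      (∀ i j, i ≠ j → Disjoint (parts i) (parts j)) ∧
      (⋃ i, parts i) = D ∧
      ∀ i, DLODefinable (parts i) ∧
        ∃ (N k : ℕ) (a : Fin k → Q) (s : Fin k → ℕ) (hsN : ∀ j, s j ≤ N),
          StrictAnti a ∧ Monotone s ∧ DefBij (parts i) (canonicalRelated N k a s hsN) :=
  dlo_partition_into_related_general D hD
end
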